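/- arXiv:2111.05156 — 4 statements merged into one kernel-verified Lean document; each statement's English description precedes it below -/
import Mathlib

section
/- Let N ≥ 1, T, β, γ, L, C₀ > 0. Let F : ℝ^N → ℝ^N satisfy ‖F(a) - F(b)‖ ≤ L‖a - b‖ and ‖F(y)‖ ≤ L(1 + ‖y‖), and let J map ℝ^N to linear maps on ℝ^N with ‖J(a) - J(b)‖ ≤ L‖a - b‖ (operator norm). Let x, v : ℝ → ℝ^N satisfy ‖v(t)‖ = 1 on [0,T] and the index-1 saddle dynamics x'(t) = β(I - 2 v(t)v(t)ᵀ)F(x(t)), v'(t) = γ(I - v(t)v(t)ᵀ)J(x(t))v(t) on [0,T]. Then there exists Q > 0, depending only on β, γ, L, T, C₀, ‖x(0)‖ and ‖J(0)‖ (and not on the time step), such that: for every positive integer N_T, setting τ = T/N_T and t_n = nτ, if (x_n), (ṽ_n), (v_n) are sequences in ℝ^N with x_0 = x(0), v_0 = v(0), and for 1 ≤ n ≤ N_T: x_n = x_{n-1} + τβ(I - 2v_{n-1}v_{n-1}ᵀ)F(x_{n-1}), ṽ_n = v_{n-1} + τγ(I - v_{n-1}v_{n-1}ᵀ)J(x_{n-1})v_{n-1},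 v_n = ṽ_n/‖ṽ_n‖, and the truncation bounds ‖x(t_n) - x(t_{n-1}) - τ x'(t_{n-1})‖ ≤ C₀τ² and ‖v(t_n) - v(t_{n-1}) - τ v'(t_{n-1})‖ ≤ C₀τ² hold, then ‖x(t_n) - x_n‖ + ‖v(t_n) - v_n‖ ≤ Q τ for all 1 ≤ n ≤ N_T. -/
/-!
The error `eₘ = ‖x(tₘ) - Xₘ‖ + ‖v(tₘ) - Vₘ‖` satisfies `eₘ₊₁ ≤ (1 + Kτ) eₘ + Cτ²`, and the
discrete Grönwall inequality turns this into `eₘ ≤ C T e^{KT} τ`. The recursion combines the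
truncation bounds with Lipschitz estimates for `(w, a) ↦ (I - 2wwᵀ) a` and `(w, a) ↦ (I - wwᵀ) a`
at unit vectors `w`. These need a priori bounds: `x` is bounded on `[0, T]` by continuity,
`‖Xₘ‖` grows at most geometrically because `I - 2wwᵀ` is an isometry, and `‖Vₘ‖ = 1`. Since the
update of `V` is orthogonal to `V`, the normalization moves `Ṽₘ` only by `O(τ²)`.
-/

open scoped InnerProductSpace
open Real

theorem le_mul_exp_of_succ_le_one_add_mul {u : ℕ → ℝ} {n : ℕ} {b c : ℝ}
    (hu₀ : ∀ m ≤ n, 0 ≤ u m) (hb : 0 ≤ b) (hc : 0 ≤ c)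
    (hu : ∀ m < n, u (m + 1) ≤ (1 + c) * u m + b) :
    ∀ m ≤ n, u m ≤ (u 0 + m * b) * exp (m * c) := by
  intro m hm
  -- freezing `u` after `n` makes the recursion hold for all indices, as `discrete_gronwall` needs
  have key := discrete_gronwall (u := fun k => u (min k n)) (c := fun _ => c) (b := fun _ => b)
    (n₀ := 0) (hu₀ 0 (Nat.zero_le _)) (fun k _ => ?_) (fun _ _ => hc) (fun _ _ => hb)
    (Nat.zero_le m)
  · simpa [min_eq_left hm, mul_comm] using key
  · rcases lt_or_ge k n with hk | hk
    · simpa [min_eq_left hk.le, min_eq_left (Nat.succ_le_of_lt hk)] using hu k hk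
    · simp only [min_eq_right hk, min_eq_right (hk.trans (Nat.le_succ k))]
      nlinarith [hu₀ n le_rfl]

section Reflections

variable {E : Type*} [NormedAddCommGroup E] [InnerProductSpace ℝ E] {w w' a b u : E}

/-- `householder w` and `tangentProj w` are the maps `I - 2wwᵀ` and `I - wwᵀ` of the paper. -/
def householder (w a : E) : E := a - (2 * ⟪w, a⟫_ℝ) • w

def tangentProj (w a : E) : E := a - ⟪w, a⟫_ℝ • w

theorem norm_householder (hw : ‖w‖ = 1) (a : E) : ‖householder w a‖ = ‖a‖ := by
  refine (sq_eq_sq₀ (norm_nonneg _) (norm_nonneg _)).1 ?_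
  rw [householder, norm_sub_sq_real, norm_smul, real_inner_smul_right, hw, Real.norm_eq_abs,
    mul_pow, sq_abs, real_inner_comm]
  ring

theorem inner_tangentProj (hw : ‖w‖ = 1) (a : E) : ⟪w, tangentProj w a⟫_ℝ = 0 := by
  rw [tangentProj, inner_sub_right, real_inner_smul_right, real_inner_self_eq_norm_sq, hw]
  ring

theorem norm_tangentProj_le (hw : ‖w‖ = 1) (a : E) : ‖tangentProj w a‖ ≤ ‖a‖ := by
  refine (sq_le_sq₀ (norm_nonneg _) (norm_nonneg _)).1 ?_
  rw [tangentProj, norm_sub_sq_real, norm_smul, real_inner_smul_right, hw, Real.norm_eq_abs,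
    mul_pow, sq_abs, real_inner_comm]
  nlinarith [sq_nonneg ⟪w, a⟫_ℝ]

theorem norm_inner_smul_sub_inner_smul_le (hw : ‖w‖ ≤ 1) (hw' : ‖w'‖ ≤ 1) :
    ‖⟪w, a⟫_ℝ • w - ⟪w', b⟫_ℝ • w'‖ ≤ ‖a - b‖ + 2 * ‖a‖ * ‖w - w'‖ := by
  have hsplit : ⟪w, a⟫_ℝ • w - ⟪w', b⟫_ℝ • w' =
      ⟪w, a⟫_ℝ • (w - w') + ⟪w - w', a⟫_ℝ • w' + ⟪w', a - b⟫_ℝ • w' := by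
    rw [inner_sub_left, inner_sub_right]; module
  calc ‖⟪w, a⟫_ℝ • w - ⟪w', b⟫_ℝ • w'‖
      ≤ ‖w‖ * ‖a‖ * ‖w - w'‖ + ‖w - w'‖ * ‖a‖ * ‖w'‖ + ‖w'‖ * ‖a - b‖ * ‖w'‖ := by
        rw [hsplit]
        refine norm_add₃_le.trans (add_le_add_three ?_ ?_ ?_) <;> rw [norm_smul] <;> gcongr <;>
          exact norm_inner_le_norm _ _
    _ ≤ 1 * ‖a‖ * ‖w - w'‖ + ‖w - w'‖ * ‖a‖ * 1 + 1 * ‖a - b‖ * 1 := by gcongr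
    _ = ‖a - b‖ + 2 * ‖a‖ * ‖w - w'‖ := by ring

theorem norm_householder_sub_householder_le (hw : ‖w‖ ≤ 1) (hw' : ‖w'‖ ≤ 1) :
    ‖householder w a - householder w' b‖ ≤ 3 * ‖a - b‖ + 4 * ‖a‖ * ‖w - w'‖ := by
  have hsplit : householder w a - householder w' b =
      (a - b) - (2 : ℝ) • (⟪w, a⟫_ℝ • w - ⟪w', b⟫_ℝ • w') := by
    simp only [householder]; module
  rw [hsplit]
  refine (norm_sub_le _ _).trans ?_
  rw [norm_smul, Real.norm_two]
  linarith [norm_inner_smul_sub_inner_smul_le (a := a) (b := b) hw hw']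

theorem norm_tangentProj_sub_tangentProj_le (hw : ‖w‖ ≤ 1) (hw' : ‖w'‖ ≤ 1) :
    ‖tangentProj w a - tangentProj w' b‖ ≤ 2 * ‖a - b‖ + 2 * ‖a‖ * ‖w - w'‖ := by
  have hsplit : tangentProj w a - tangentProj w' b = (a - b) - (⟪w, a⟫_ℝ • w - ⟪w', b⟫_ℝ • w') := by
    simp only [tangentProj]; abel
  rw [hsplit]
  linarith [norm_sub_le (a - b) (⟪w, a⟫_ℝ • w - ⟪w', b⟫_ℝ • w'),
    norm_inner_smul_sub_inner_smul_le (a := a) (b := b) hw hw']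

theorem one_le_norm_add_of_inner_eq_zero (hw : ‖w‖ = 1) (h : ⟪w, u⟫_ℝ = 0) : 1 ≤ ‖w + u‖ := by
  have := norm_add_sq_eq_norm_sq_add_norm_sq_real h
  rw [hw] at this
  nlinarith [norm_nonneg (w + u), mul_self_nonneg ‖u‖]

theorem norm_sub_inv_norm_smul_le (hw : ‖w‖ = 1) (h : ⟪w, u⟫_ℝ = 0) :
    ‖(w + u) - ‖w + u‖⁻¹ • (w + u)‖ ≤ ‖u‖ ^ 2 / 2 := by
  have hs := one_le_norm_add_of_inner_eq_zero hw h
  have hfactor : (w + u) - ‖w + u‖⁻¹ • (w + u) = (1 - ‖w + u‖⁻¹) • (w + u) := by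
    rw [sub_smul, one_smul]
  have hpyth := norm_add_sq_eq_norm_sq_add_norm_sq_real h
  rw [hw] at hpyth
  calc ‖(w + u) - ‖w + u‖⁻¹ • (w + u)‖ = ‖w + u‖ - 1 := by
        rw [hfactor, norm_smul,
          Real.norm_of_nonneg (sub_nonneg.2 (inv_le_one_of_one_le₀ hs))]
        field_simp
    _ ≤ ‖u‖ ^ 2 / 2 := by nlinarith [sq_nonneg (‖w + u‖ - 1)]

theorem norm_sub_add_smul_le (x₀ x₁ X₀ g G : E) {τ : ℝ} (hτ : 0 ≤ τ) :
    ‖x₁ - (X₀ + τ • G)‖ ≤ ‖x₁ - x₀ - τ • g‖ + ‖x₀ - X₀‖ + τ * ‖g - G‖ := by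
  have hsplit : x₁ - (X₀ + τ • G) = (x₁ - x₀ - τ • g) + (x₀ - X₀) + τ • (g - G) := by module
  rw [hsplit]
  refine norm_add₃_le.trans ?_
  rw [norm_smul, Real.norm_of_nonneg hτ]

end Reflections

section EulerScheme

variable {E : Type*} [NormedAddCommGroup E] [InnerProductSpace ℝ E]
  {F : E → E} {J : E → E →L[ℝ] E} {β γ τ L C₀ MF MJ : ℝ}

theorem norm_householder_apply_sub_le (hL : 0 ≤ L) (hFlip : ∀ a b, ‖F a - F b‖ ≤ L * ‖a - b‖)
    {x X v V : E} (hFx : ‖F x‖ ≤ MF) (hv : ‖v‖ ≤ 1) (hV : ‖V‖ ≤ 1) :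
    ‖householder v (F x) - householder V (F X)‖ ≤ (3 * L + 4 * MF) * (‖x - X‖ + ‖v - V‖) := by
  have hMF : 0 ≤ MF := (norm_nonneg _).trans hFx
  calc ‖householder v (F x) - householder V (F X)‖
      ≤ 3 * ‖F x - F X‖ + 4 * ‖F x‖ * ‖v - V‖ := norm_householder_sub_householder_le hv hV
    _ ≤ 3 * (L * ‖x - X‖) + 4 * MF * ‖v - V‖ := by gcongr; exact hFlip x X
    _ ≤ (3 * L + 4 * MF) * (‖x - X‖ + ‖v - V‖) := by
        nlinarith [norm_nonneg (x - X), norm_nonneg (v - V)]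

theorem norm_tangentProj_apply_sub_le (hL : 0 ≤ L) (hJlip : ∀ a b, ‖J a - J b‖ ≤ L * ‖a - b‖)
    {x X v V : E} (hJx : ‖J x‖ ≤ MJ) (hJX : ‖J X‖ ≤ MJ) (hv : ‖v‖ ≤ 1) (hV : ‖V‖ ≤ 1) :
    ‖tangentProj v (J x v) - tangentProj V (J X V)‖ ≤
      (2 * L + 4 * MJ) * (‖x - X‖ + ‖v - V‖) := by
  have hMJ : 0 ≤ MJ := (norm_nonneg _).trans hJx
  have hJv : ‖J x v‖ ≤ MJ :=
    ((J x).le_opNorm v).trans (by nlinarith [norm_nonneg (J x), norm_nonneg v])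
  have hJdiff : ‖J x v - J X V‖ ≤ L * ‖x - X‖ + MJ * ‖v - V‖ := by
    have hsplit : J x v - J X V = (J x - J X) v + J X (v - V) := by
      rw [sub_apply, map_sub]; abel
    rw [hsplit]
    refine (norm_add_le _ _).trans (add_le_add ?_ ?_)
    · calc ‖(J x - J X) v‖ ≤ ‖J x - J X‖ * ‖v‖ := (J x - J X).le_opNorm v
        _ ≤ L * ‖x - X‖ * 1 := by gcongr; exact hJlip x X
        _ = L * ‖x - X‖ := mul_one _
    · exact ((J X).le_opNorm _).trans (by gcongr)
  calc ‖tangentProj v (J x v) - tangentProj V (J X V)‖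
      ≤ 2 * ‖J x v - J X V‖ + 2 * ‖J x v‖ * ‖v - V‖ := norm_tangentProj_sub_tangentProj_le hv hV
    _ ≤ 2 * (L * ‖x - X‖ + MJ * ‖v - V‖) + 2 * MJ * ‖v - V‖ := by gcongr
    _ ≤ (2 * L + 4 * MJ) * (‖x - X‖ + ‖v - V‖) := by
        nlinarith [norm_nonneg (x - X), norm_nonneg (v - V)]

theorem norm_euler_x_error_le (hβ : 0 ≤ β) (hτ : 0 ≤ τ) (hL : 0 ≤ L)
    (hFlip : ∀ a b, ‖F a - F b‖ ≤ L * ‖a - b‖) {x₀ x₁ X₀ v₀ V₀ : E}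
    (hFx : ‖F x₀‖ ≤ MF) (hv : ‖v₀‖ ≤ 1) (hV : ‖V₀‖ ≤ 1)
    (htr : ‖x₁ - x₀ - τ • (β • householder v₀ (F x₀))‖ ≤ C₀ * τ ^ 2) :
    ‖x₁ - (X₀ + (τ * β) • householder V₀ (F X₀))‖ ≤
      C₀ * τ ^ 2 + ‖x₀ - X₀‖ + τ * β * ((3 * L + 4 * MF) * (‖x₀ - X₀‖ + ‖v₀ - V₀‖)) := by
  have hlip := norm_householder_apply_sub_le (X := X₀) hL hFlip hFx hv hV
  rw [mul_smul]
  refine (norm_sub_add_smul_le x₀ x₁ X₀ (β • householder v₀ (F x₀)) _ hτ).trans ?_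
  rw [← smul_sub, norm_smul, Real.norm_of_nonneg hβ, ← mul_assoc]
  gcongr

theorem norm_euler_v_error_le (hγ : 0 ≤ γ) (hτ : 0 ≤ τ) (hL : 0 ≤ L)
    (hJlip : ∀ a b, ‖J a - J b‖ ≤ L * ‖a - b‖) {x₀ X₀ v₀ v₁ V₀ Vt₁ : E}
    (hJx : ‖J x₀‖ ≤ MJ) (hJX : ‖J X₀‖ ≤ MJ) (hv : ‖v₀‖ ≤ 1) (hV : ‖V₀‖ = 1)
    (htr : ‖v₁ - v₀ - τ • (γ • tangentProj v₀ (J x₀ v₀))‖ ≤ C₀ * τ ^ 2)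
    (hVt : Vt₁ = V₀ + (τ * γ) • tangentProj V₀ (J X₀ V₀)) :
    ‖v₁ - ‖Vt₁‖⁻¹ • Vt₁‖ ≤
      C₀ * τ ^ 2 + ‖v₀ - V₀‖ + τ * γ * ((2 * L + 4 * MJ) * (‖x₀ - X₀‖ + ‖v₀ - V₀‖)) +
        (τ * γ * MJ) ^ 2 / 2 := by
  have hlip := norm_tangentProj_apply_sub_le hL hJlip hJx hJX hv hV.le
  have hstep : ‖v₁ - Vt₁‖ ≤
      C₀ * τ ^ 2 + ‖v₀ - V₀‖ + τ * γ * ((2 * L + 4 * MJ) * (‖x₀ - X₀‖ + ‖v₀ - V₀‖)) := by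
    rw [hVt, mul_smul]
    refine (norm_sub_add_smul_le v₀ v₁ V₀ (γ • tangentProj v₀ (J x₀ v₀)) _ hτ).trans ?_
    rw [← smul_sub, norm_smul, Real.norm_of_nonneg hγ, ← mul_assoc]
    gcongr
  have hnormalize : ‖Vt₁ - ‖Vt₁‖⁻¹ • Vt₁‖ ≤ (τ * γ * MJ) ^ 2 / 2 := by
    rw [hVt]
    refine (norm_sub_inv_norm_smul_le hV
      (by rw [real_inner_smul_right, inner_tangentProj hV, mul_zero])).trans ?_
    rw [norm_smul, Real.norm_of_nonneg (mul_nonneg hτ hγ)]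
    have : ‖tangentProj V₀ (J X₀ V₀)‖ ≤ MJ :=
      (norm_tangentProj_le hV _).trans
        (((J X₀).le_opNorm V₀).trans (by rw [hV, mul_one]; exact hJX))
    gcongr
  exact (norm_sub_le_norm_sub_add_norm_sub _ _ _).trans (add_le_add hstep hnormalize)

/-- `R` bounds the exact and the discrete positions on the grid, `J₀` stands for `‖J 0‖`. -/
def euler1SDRate (β γ L R J₀ : ℝ) : ℝ :=
  β * (3 * L + 4 * (L * (1 + R))) + γ * (2 * L + 4 * (J₀ + L * R))

noncomputable def euler1SDDefect (γ L C₀ R J₀ : ℝ) : ℝ := 2 * C₀ + (γ * (J₀ + L * R)) ^ 2 / 2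

theorem norm_euler_error_succ_le (hβ : 0 ≤ β) (hγ : 0 ≤ γ) (hτ : 0 ≤ τ) (hL : 0 ≤ L)
    (hFlip : ∀ a b, ‖F a - F b‖ ≤ L * ‖a - b‖) (hFg : ∀ y, ‖F y‖ ≤ L * (1 + ‖y‖))
    (hJlip : ∀ a b, ‖J a - J b‖ ≤ L * ‖a - b‖) {R : ℝ} {x₀ x₁ X₀ v₀ v₁ V₀ Vt₁ : E}
    (hx : ‖x₀‖ ≤ R) (hX : ‖X₀‖ ≤ R) (hv : ‖v₀‖ ≤ 1) (hV : ‖V₀‖ = 1)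
    (htrx : ‖x₁ - x₀ - τ • (β • householder v₀ (F x₀))‖ ≤ C₀ * τ ^ 2)
    (htrv : ‖v₁ - v₀ - τ • (γ • tangentProj v₀ (J x₀ v₀))‖ ≤ C₀ * τ ^ 2)
    (hVt : Vt₁ = V₀ + (τ * γ) • tangentProj V₀ (J X₀ V₀)) :
    ‖x₁ - (X₀ + (τ * β) • householder V₀ (F X₀))‖ + ‖v₁ - ‖Vt₁‖⁻¹ • Vt₁‖ ≤
      (1 + τ * euler1SDRate β γ L R ‖J 0‖) * (‖x₀ - X₀‖ + ‖v₀ - V₀‖) +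
        τ ^ 2 * euler1SDDefect γ L C₀ R ‖J 0‖ := by
  have hJ : ∀ y, ‖y‖ ≤ R → ‖J y‖ ≤ ‖J 0‖ + L * R := fun y hy => by
    have := hJlip y 0
    rw [sub_zero] at this
    nlinarith [norm_le_norm_add_norm_sub' (J y) (J 0)]
  have hFx : ‖F x₀‖ ≤ L * (1 + R) := (hFg _).trans (by gcongr)
  have hxstep := norm_euler_x_error_le hβ hτ hL hFlip hFx hv hV.le htrx (X₀ := X₀)
  have hvstep := norm_euler_v_error_le hγ hτ hL hJlip (hJ _ hx) (hJ _ hX) hv hV htrv hVt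
  rw [euler1SDRate, euler1SDDefect]
  linarith

end EulerScheme

section EulerSequence

variable {E : Type*} [NormedAddCommGroup E] [InnerProductSpace ℝ E]
  {F : E → E} {J : E → E →L[ℝ] E} {β γ τ L : ℝ} {n : ℕ} {X Vt V : ℕ → E}

theorem norm_euler_V_eq_one (hV₀ : ‖V 0‖ = 1)
    (hVt : ∀ m < n, Vt (m + 1) = V m + (τ * γ) • tangentProj (V m) (J (X m) (V m)))
    (hV : ∀ m < n, V (m + 1) = ‖Vt (m + 1)‖⁻¹ • Vt (m + 1)) :
    ∀ m ≤ n, ‖V m‖ = 1 := by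
  intro m hm
  induction m with
  | zero => exact hV₀
  | succ m ih =>
    have hunit := ih (Nat.le_of_succ_le hm)
    have horth : ⟪V m, (τ * γ) • tangentProj (V m) (J (X m) (V m))⟫_ℝ = 0 := by
      rw [real_inner_smul_right, inner_tangentProj hunit, mul_zero]
    have hpos := (one_le_norm_add_of_inner_eq_zero hunit horth).trans_lt' one_pos
    rw [hV m hm, hVt m hm, norm_smul, norm_inv, norm_norm, inv_mul_cancel₀ hpos.ne']

theorem norm_euler_X_add_one_le (hβ : 0 ≤ β) (hτ : 0 ≤ τ) (hL : 0 ≤ L)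
    (hFg : ∀ y, ‖F y‖ ≤ L * (1 + ‖y‖)) (hVunit : ∀ m ≤ n, ‖V m‖ = 1)
    (hX : ∀ m < n, X (m + 1) = X m + (τ * β) • householder (V m) (F (X m))) :
    ∀ m ≤ n, ‖X m‖ + 1 ≤ (‖X 0‖ + 1) * exp (m * (τ * β * L)) := by
  have hgrowth := le_mul_exp_of_succ_le_one_add_mul (u := fun m => ‖X m‖ + 1) (b := 0)
    (c := τ * β * L)
    (fun _ _ => by positivity) le_rfl (by positivity) fun m hm => by
      have hFX := hFg (X m)
      calc ‖X (m + 1)‖ + 1 ≤ ‖X m‖ + τ * β * ‖F (X m)‖ + 1 := by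
            have htri := norm_add_le (X m) ((τ * β) • householder (V m) (F (X m)))
            rw [norm_smul, Real.norm_of_nonneg (mul_nonneg hτ hβ),
              norm_householder (hVunit m hm.le)] at htri
            rw [hX m hm]
            linarith
        _ ≤ (1 + τ * β * L) * (‖X m‖ + 1) + 0 := by nlinarith [mul_nonneg hτ hβ]
  simpa using hgrowth

noncomputable def euler1SDErrorConst (β γ L T C₀ R J₀ : ℝ) : ℝ :=
  T * euler1SDDefect γ L C₀ R J₀ * exp (T * euler1SDRate β γ L R J₀)

theorem norm_euler_error_le (hβ : 0 ≤ β) (hγ : 0 ≤ γ) (hτ : 0 ≤ τ) (hL : 0 ≤ L)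
    {C₀ Mx T : ℝ} (hC₀ : 0 ≤ C₀) (hFlip : ∀ a b, ‖F a - F b‖ ≤ L * ‖a - b‖)
    (hFg : ∀ y, ‖F y‖ ≤ L * (1 + ‖y‖)) (hJlip : ∀ a b, ‖J a - J b‖ ≤ L * ‖a - b‖)
    {x v : ℕ → E} (hnT : n * τ ≤ T) (hx : ∀ m ≤ n, ‖x m‖ ≤ Mx) (hv : ∀ m ≤ n, ‖v m‖ = 1)
    (hX₀ : X 0 = x 0) (hV₀ : V 0 = v 0)
    (hX : ∀ m < n, X (m + 1) = X m + (τ * β) • householder (V m) (F (X m)))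
    (hVt : ∀ m < n, Vt (m + 1) = V m + (τ * γ) • tangentProj (V m) (J (X m) (V m)))
    (hV : ∀ m < n, V (m + 1) = ‖Vt (m + 1)‖⁻¹ • Vt (m + 1))
    (htrx : ∀ m < n, ‖x (m + 1) - x m - τ • (β • householder (v m) (F (x m)))‖ ≤ C₀ * τ ^ 2)
    (htrv : ∀ m < n,
      ‖v (m + 1) - v m - τ • (γ • tangentProj (v m) (J (x m) (v m)))‖ ≤ C₀ * τ ^ 2) :
    ∀ m ≤ n, ‖x m - X m‖ + ‖v m - V m‖ ≤
      euler1SDErrorConst β γ L T C₀ ((Mx + 1) * exp (β * L * T)) ‖J 0‖ * τ := by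
  set R := (Mx + 1) * exp (β * L * T)
  set K := euler1SDRate β γ L R ‖J 0‖
  set C := euler1SDDefect γ L C₀ R ‖J 0‖
  have hmT : ∀ m ≤ n, m * τ ≤ T := fun m hm =>
    (mul_le_mul_of_nonneg_right (Nat.cast_le.2 hm) hτ).trans hnT
  have hT : 0 ≤ T := (mul_nonneg n.cast_nonneg hτ).trans hnT
  have hMx : 0 ≤ Mx := (norm_nonneg _).trans (hx 0 (Nat.zero_le n))
  have hVunit := norm_euler_V_eq_one (hV₀ ▸ hv 0 (Nat.zero_le n)) hVt hV
  have hxR : ∀ m ≤ n, ‖x m‖ ≤ R := fun m hm =>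
    (hx m hm).trans (by nlinarith [one_le_exp (by positivity : 0 ≤ β * L * T)])
  have hXR : ∀ m ≤ n, ‖X m‖ ≤ R := fun m hm => by
    have hgrowth := norm_euler_X_add_one_le hβ hτ hL hFg hVunit hX m hm
    rw [hX₀] at hgrowth
    have hexp : exp (m * (τ * β * L)) ≤ exp (β * L * T) := by
      refine exp_le_exp.2 ?_
      linarith [mul_le_mul_of_nonneg_right (hmT m hm) (mul_nonneg hβ hL)]
    nlinarith [hx 0 (Nat.zero_le n), exp_pos (m * (τ * β * L))]
  have hK : 0 ≤ K := by unfold K euler1SDRate; positivity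
  have hC : 0 ≤ C := by unfold C euler1SDDefect; positivity
  have hgronwall := le_mul_exp_of_succ_le_one_add_mul
    (u := fun m => ‖x m - X m‖ + ‖v m - V m‖) (b := τ ^ 2 * C) (c := τ * K)
    (fun _ _ => by positivity) (by positivity) (by positivity) fun m hm => by
      rw [hX m hm, hV m hm]
      exact norm_euler_error_succ_le hβ hγ hτ hL hFlip hFg hJlip (hxR m hm.le) (hXR m hm.le)
        (hv m hm.le).le (hVunit m hm.le) (htrx m hm) (htrv m hm) (hVt m hm)
  intro m hm
  calc ‖x m - X m‖ + ‖v m - V m‖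
      ≤ (‖x 0 - X 0‖ + ‖v 0 - V 0‖ + m * (τ ^ 2 * C)) * exp (m * (τ * K)) := hgronwall m hm
    _ = τ * ((m * τ) * C * exp ((m * τ) * K)) := by
        rw [hX₀, hV₀, sub_self, sub_self, norm_zero]
        ring_nf
    _ ≤ τ * (T * C * exp (T * K)) := by gcongr <;> exact hmT m hm
    _ = euler1SDErrorConst β γ L T C₀ R ‖J 0‖ * τ := by rw [euler1SDErrorConst]; ring

end EulerSequence

theorem first_order_convergence_euler_1SD_general (N : ℕ)
    (T β γ L C₀ : ℝ) (hT : 0 < T) (hβ : 0 < β) (hγ : 0 < γ) (hL : 0 < L) (hC₀ : 0 < C₀)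
    (F : EuclideanSpace ℝ (Fin N) → EuclideanSpace ℝ (Fin N))
    (hFlip : ∀ a b, ‖F a - F b‖ ≤ L * ‖a - b‖)
    (hFg : ∀ y, ‖F y‖ ≤ L * (1 + ‖y‖))
    (J : EuclideanSpace ℝ (Fin N) →
      EuclideanSpace ℝ (Fin N) →L[ℝ] EuclideanSpace ℝ (Fin N))
    (hJlip : ∀ a b, ‖J a - J b‖ ≤ L * ‖a - b‖)
    (x v : ℝ → EuclideanSpace ℝ (Fin N))
    (hv : ∀ t ∈ Set.Icc (0:ℝ) T, ‖v t‖ = 1)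
    (hx : ∀ t ∈ Set.Icc (0:ℝ) T,
      HasDerivWithinAt x
        (β • (F (x t) - (2 * ⟪v t, F (x t)⟫_ℝ) • v t)) (Set.Icc (0:ℝ) T) t) :
    ∃ Q : ℝ, 0 < Q ∧
      ∀ (NT : ℕ), 0 < NT → ∀ τ : ℝ, τ = T / NT →
        ∀ (X Vt V : ℕ → EuclideanSpace ℝ (Fin N)),
          X 0 = x 0 → V 0 = v 0 →
          (∀ n, 1 ≤ n → n ≤ NT →
            X n = X (n - 1) + (τ * β) •
              (F (X (n - 1)) - (2 * ⟪V (n - 1), F (X (n - 1))⟫_ℝ) • V (n - 1))) →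
          (∀ n, 1 ≤ n → n ≤ NT →
            Vt n = V (n - 1) + (τ * γ) •
              (J (X (n - 1)) (V (n - 1)) -
                ⟪V (n - 1), J (X (n - 1)) (V (n - 1))⟫_ℝ • V (n - 1))) →
          (∀ n, 1 ≤ n → n ≤ NT → V n = ‖Vt n‖⁻¹ • Vt n) →
          (∀ n, 1 ≤ n → n ≤ NT →
            ‖x ((n:ℝ) * τ) - x (((n - 1 : ℕ) : ℝ) * τ) - τ •
              (β • (F (x (((n - 1 : ℕ) : ℝ) * τ)) -
                (2 * ⟪v (((n - 1 : ℕ) : ℝ) * τ), F (x (((n - 1 : ℕ) : ℝ) * τ))⟫_ℝ) •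
                  v (((n - 1 : ℕ) : ℝ) * τ)))‖ ≤ C₀ * τ ^ 2) →
          (∀ n, 1 ≤ n → n ≤ NT →
            ‖v ((n:ℝ) * τ) - v (((n - 1 : ℕ) : ℝ) * τ) - τ •
              (γ • (J (x (((n - 1 : ℕ) : ℝ) * τ)) (v (((n - 1 : ℕ) : ℝ) * τ)) -
                ⟪v (((n - 1 : ℕ) : ℝ) * τ),
                  J (x (((n - 1 : ℕ) : ℝ) * τ)) (v (((n - 1 : ℕ) : ℝ) * τ))⟫_ℝ •
                    v (((n - 1 : ℕ) : ℝ) * τ)))‖ ≤ C₀ * τ ^ 2) →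
          ∀ n, 1 ≤ n → n ≤ NT →
            ‖x ((n:ℝ) * τ) - X n‖ + ‖v ((n:ℝ) * τ) - V n‖ ≤ Q * τ := by
  obtain ⟨Mx, hMx⟩ := isCompact_Icc.exists_bound_of_continuousOn
    fun t ht => (hx t ht).continuousWithinAt
  refine ⟨euler1SDErrorConst β γ L T C₀ ((Mx + 1) * exp (β * L * T)) ‖J 0‖,
    by unfold euler1SDErrorConst euler1SDDefect euler1SDRate; positivity, ?_⟩
  intro NT hNT τ hτ X Vt V hX₀ hV₀ hX hVt hV htrx htrv n _ hn
  have hτ₀ : 0 ≤ τ := hτ ▸ by positivity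
  have hNTτ : (NT : ℝ) * τ = T := by rw [hτ]; field_simp
  have hgrid : ∀ m ≤ NT, (m : ℝ) * τ ∈ Set.Icc 0 T := fun m hm =>
    ⟨by positivity, hNTτ ▸ by gcongr⟩
  exact norm_euler_error_le (x := fun m => x (m * τ)) (v := fun m => v (m * τ))
    hβ.le hγ.le hτ₀ hL.le hC₀.le hFlip hFg hJlip hNTτ.le (fun m hm => hMx _ (hgrid m hm))
    (fun m hm => hv _ (hgrid m hm)) (by simpa using hX₀) (by simpa using hV₀)
    (fun m hm => hX (m + 1) (by omega) hm) (fun m hm => hVt (m + 1) (by omega) hm)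
    (fun m hm => hV (m + 1) (by omega) hm) (fun m hm => htrx (m + 1) (by omega) hm)
    (fun m hm => htrv (m + 1) (by omega) hm) n hn

/-- Theorem 3.2 of the paper: first-order convergence of the explicit Euler scheme
for index-1 saddle dynamics. -/
theorem first_order_convergence_euler_1SD (N : ℕ) (hN : 1 ≤ N)
    (T β γ L C₀ : ℝ) (hT : 0 < T) (hβ : 0 < β) (hγ : 0 < γ) (hL : 0 < L) (hC₀ : 0 < C₀)
    (F : EuclideanSpace ℝ (Fin N) → EuclideanSpace ℝ (Fin N))
    (hFlip : ∀ a b, ‖F a - F b‖ ≤ L * ‖a - b‖)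
    (hFg : ∀ y, ‖F y‖ ≤ L * (1 + ‖y‖))
    (J : EuclideanSpace ℝ (Fin N) →
      EuclideanSpace ℝ (Fin N) →L[ℝ] EuclideanSpace ℝ (Fin N))
    (hJlip : ∀ a b, ‖J a - J b‖ ≤ L * ‖a - b‖)
    (x v : ℝ → EuclideanSpace ℝ (Fin N))
    (hv : ∀ t ∈ Set.Icc (0:ℝ) T, ‖v t‖ = 1)
    (hx : ∀ t ∈ Set.Icc (0:ℝ) T,
      HasDerivWithinAt x
        (β • (F (x t) - (2 * ⟪v t, F (x t)⟫_ℝ) • v t)) (Set.Icc (0:ℝ) T) t)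
    (hvd : ∀ t ∈ Set.Icc (0:ℝ) T,
      HasDerivWithinAt v
        (γ • (J (x t) (v t) - ⟪v t, J (x t) (v t)⟫_ℝ • v t)) (Set.Icc (0:ℝ) T) t) :
    ∃ Q : ℝ, 0 < Q ∧
      ∀ (NT : ℕ), 0 < NT → ∀ τ : ℝ, τ = T / NT →
        ∀ (X Vt V : ℕ → EuclideanSpace ℝ (Fin N)),
          X 0 = x 0 → V 0 = v 0 →
          (∀ n, 1 ≤ n → n ≤ NT →
            X n = X (n - 1) + (τ * β) •
              (F (X (n - 1)) - (2 * ⟪V (n - 1), F (X (n - 1))⟫_ℝ) • V (n - 1))) →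
          (∀ n, 1 ≤ n → n ≤ NT →
            Vt n = V (n - 1) + (τ * γ) •
              (J (X (n - 1)) (V (n - 1)) -
                ⟪V (n - 1), J (X (n - 1)) (V (n - 1))⟫_ℝ • V (n - 1))) →
          (∀ n, 1 ≤ n → n ≤ NT → V n = ‖Vt n‖⁻¹ • Vt n) →
          (∀ n, 1 ≤ n → n ≤ NT →
            ‖x ((n:ℝ) * τ) - x (((n - 1 : ℕ) : ℝ) * τ) - τ •
              (β • (F (x (((n - 1 : ℕ) : ℝ) * τ)) -
                (2 * ⟪v (((n - 1 : ℕ) : ℝ) * τ), F (x (((n - 1 : ℕ) : ℝ) * τ))⟫_ℝ) •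
                  v (((n - 1 : ℕ) : ℝ) * τ)))‖ ≤ C₀ * τ ^ 2) →
          (∀ n, 1 ≤ n → n ≤ NT →
            ‖v ((n:ℝ) * τ) - v (((n - 1 : ℕ) : ℝ) * τ) - τ •
              (γ • (J (x (((n - 1 : ℕ) : ℝ) * τ)) (v (((n - 1 : ℕ) : ℝ) * τ)) -
                ⟪v (((n - 1 : ℕ) : ℝ) * τ),
                  J (x (((n - 1 : ℕ) : ℝ) * τ)) (v (((n - 1 : ℕ) : ℝ) * τ))⟫_ℝ •
                    v (((n - 1 : ℕ) : ℝ) * τ)))‖ ≤ C₀ * τ ^ 2) →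
          ∀ n, 1 ≤ n → n ≤ NT →
            ‖x ((n:ℝ) * τ) - X n‖ + ‖v ((n:ℝ) * τ) - V n‖ ≤ Q * τ :=
  first_order_convergence_euler_1SD_general N T β γ L C₀ hT hβ hγ hL hC₀ F hFlip hFg J hJlip x v hv
    hx
end

section
/- Let N ≥ 1, k ≥ 1, τ > 0, and let 0 < M < G be constants with 1 - M τ² - τ⁴ (k-1) G² > 0 and (M + τ² (k-1) G²) / √(1 - M τ² - τ⁴ (k-1) G²) ≤ G. Let ṽ_1, …, ṽ_k ∈ ℝ^N satisfy |⟪ṽ_m, ṽ_i⟫| ≤ M τ² for all m ≠ i and |‖ṽ_i‖² - 1| ≤ M τ² for all i, and define v_1, …, v_k recursively by the normalized Gram–Schmidt procedure v_i = (ṽ_i - ∑_{j=1}^{i-1} ⟪ṽ_i, v_j⟫ v_j) / Y_i with Y_i = ‖ṽ_i - ∑_{j=1}^{i-1} ⟪ṽ_i, v_j⟫ v_j‖, all Y_i being assumed nonzero. Then for every 1 ≤ i ≤ k, Y_i² = ‖ṽ_i‖² - ∑_{j=1}^{i-1} ⟪ṽ_i, v_j⟫², and √(1 - M τ² - (k-1)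 G² τ⁴) ≤ Y_i ≤ √(1 + M τ² + (k-1) G² τ⁴). -/
/-!
The `v i` are Mathlib's Gram–Schmidt vectors of the `vt i`, rescaled by the nonzero factors
`Y i`, hence orthonormal, and Bessel's identity gives the formula for `Y i ^ 2`, from which the
upper bound is immediate. The lower bound needs `|⟪vt m, v j⟫| ≤ G τ²` for `j < m`, proved by
strong induction on `j`: expanding `v j` gives `|⟪vt m, v j⟫| ≤ (M τ² + (k - 1) G² τ⁴) / Y j`,
the induction hypothesis bounds `Y j` below by `√(1 - M τ² - (k - 1) G² τ⁴)`, and the assumption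
on `G` is exactly what makes the induction close.
-/

open scoped InnerProductSpace
open Finset InnerProductSpace

variable {E : Type*} [NormedAddCommGroup E] [InnerProductSpace ℝ E]

theorem Orthonormal.norm_sub_sum_inner_smul_sq {ι : Type*} {v : ι → E} (hv : Orthonormal ℝ v)
    (s : Finset ι) (x : E) :
    ‖x - ∑ j ∈ s, ⟪x, v j⟫_ℝ • v j‖ ^ 2 = ‖x‖ ^ 2 - ∑ j ∈ s, ⟪x, v j⟫_ℝ ^ 2 := by
  have hcross : ⟪x, ∑ j ∈ s, ⟪x, v j⟫_ℝ • v j⟫_ℝ = ∑ j ∈ s, ⟪x, v j⟫_ℝ ^ 2 := by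
    simp only [inner_sum, real_inner_smul_right, sq]
  have hproj : ‖∑ j ∈ s, ⟪x, v j⟫_ℝ • v j‖ ^ 2 = ∑ j ∈ s, ⟪x, v j⟫_ℝ ^ 2 := by
    rw [← real_inner_self_eq_norm_sq, hv.inner_sum]
    simp only [conj_trivial, sq]
  rw [norm_sub_sq_real, hcross, hproj]
  ring

theorem abs_sum_mul_le_card_mul_sq {ι : Type*} (s : Finset ι) {a b : ι → ℝ} {g : ℝ}
    (ha : ∀ j ∈ s, |a j| ≤ g) (hb : ∀ j ∈ s, |b j| ≤ g) :
    |∑ j ∈ s, a j * b j| ≤ #s * g ^ 2 := by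
  have hterm : ∀ j ∈ s, |a j * b j| ≤ g ^ 2 := fun j hj => by
    rw [abs_mul, sq]
    exact mul_le_mul (ha j hj) (hb j hj) (abs_nonneg _) ((abs_nonneg _).trans (ha j hj))
  calc |∑ j ∈ s, a j * b j| ≤ ∑ j ∈ s, |a j * b j| := abs_sum_le_sum_abs _ _
    _ ≤ #s * g ^ 2 := by simpa using sum_le_card_nsmul s _ _ hterm

theorem Orthonormal.sqrt_le_norm_sub_sum_inner_smul {ι : Type*} {v : ι → E}
    (hv : Orthonormal ℝ v) {s : Finset ι} {x : E} {a g n : ℝ} (hs : (#s : ℝ) ≤ n)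
    (hx : |‖x‖ ^ 2 - 1| ≤ a) (hg : ∀ j ∈ s, |⟪x, v j⟫_ℝ| ≤ g) :
    √(1 - a - n * g ^ 2) ≤ ‖x - ∑ j ∈ s, ⟪x, v j⟫_ℝ • v j‖ := by
  have hsum : ∑ j ∈ s, ⟪x, v j⟫_ℝ ^ 2 ≤ n * g ^ 2 :=
    calc ∑ j ∈ s, ⟪x, v j⟫_ℝ ^ 2 = ∑ j ∈ s, ⟪x, v j⟫_ℝ * ⟪x, v j⟫_ℝ := by simp only [sq]
      _ ≤ |∑ j ∈ s, ⟪x, v j⟫_ℝ * ⟪x, v j⟫_ℝ| := le_abs_self _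
      _ ≤ #s * g ^ 2 := abs_sum_mul_le_card_mul_sq s hg hg
      _ ≤ n * g ^ 2 := mul_le_mul_of_nonneg_right hs (sq_nonneg g)
  rw [Real.sqrt_le_left (norm_nonneg _), hv.norm_sub_sum_inner_smul_sq]
  linarith [(abs_le.mp hx).1]

section GramSchmidt

variable {ι : Type*} [LinearOrder ι] [LocallyFiniteOrderBot ι] {vt v : ι → E} {Y : ι → ℝ}

theorem norm_eq_one_of_gramSchmidt_recursion
    (hY : ∀ i, Y i = ‖vt i - ∑ j ∈ Iio i, ⟪vt i, v j⟫_ℝ • v j‖) (hYne : ∀ i, Y i ≠ 0)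
    (hv : ∀ i, v i = (Y i)⁻¹ • (vt i - ∑ j ∈ Iio i, ⟪vt i, v j⟫_ℝ • v j)) (i : ι) :
    ‖v i‖ = 1 := by
  rw [hv i, norm_smul, ← hY i, Real.norm_eq_abs, abs_inv, abs_of_nonneg (hY i ▸ norm_nonneg _),
    inv_mul_cancel₀ (hYne i)]

variable [WellFoundedLT ι]

theorem gramSchmidt_eq_smul_of_gramSchmidt_recursion
    (hY : ∀ i, Y i = ‖vt i - ∑ j ∈ Iio i, ⟪vt i, v j⟫_ℝ • v j‖) (hYne : ∀ i, Y i ≠ 0)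
    (hv : ∀ i, v i = (Y i)⁻¹ • (vt i - ∑ j ∈ Iio i, ⟪vt i, v j⟫_ℝ • v j)) (i : ι) :
    gramSchmidt ℝ vt i = Y i • v i := by
  induction i using WellFoundedLT.induction with
  | _ i ih =>
    have hproj : ∀ j ∈ Iio i,
        (ℝ ∙ gramSchmidt ℝ vt j).starProjection (vt i) = ⟪vt i, v j⟫_ℝ • v j := by
      intro j hj
      simp only [ih j (mem_Iio.mp hj), Submodule.span_singleton_smul_eq (hYne j).isUnit]
      rw [Submodule.starProjection_unit_singleton ℝ
          (norm_eq_one_of_gramSchmidt_recursion hY hYne hv j), real_inner_comm]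
    rw [gramSchmidt_def, sum_congr rfl hproj, hv i, smul_inv_smul₀ (hYne i)]

theorem orthonormal_of_gramSchmidt_recursion
    (hY : ∀ i, Y i = ‖vt i - ∑ j ∈ Iio i, ⟪vt i, v j⟫_ℝ • v j‖) (hYne : ∀ i, Y i ≠ 0)
    (hv : ∀ i, v i = (Y i)⁻¹ • (vt i - ∑ j ∈ Iio i, ⟪vt i, v j⟫_ℝ • v j)) :
    Orthonormal ℝ v := by
  refine ⟨norm_eq_one_of_gramSchmidt_recursion hY hYne hv, fun a b hab => ?_⟩
  simpa only [gramSchmidt_eq_smul_of_gramSchmidt_recursion hY hYne hv, real_inner_smul_left,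
    real_inner_smul_right, mul_eq_zero, hYne, false_or] using gramSchmidt_orthogonal ℝ vt hab

theorem abs_inner_le_of_gramSchmidt_recursion {a g n : ℝ} (hcard : ∀ i : ι, (#(Iio i) : ℝ) ≤ n)
    (hY : ∀ i, Y i = ‖vt i - ∑ j ∈ Iio i, ⟪vt i, v j⟫_ℝ • v j‖) (hYne : ∀ i, Y i ≠ 0)
    (hv : ∀ i, v i = (Y i)⁻¹ • (vt i - ∑ j ∈ Iio i, ⟪vt i, v j⟫_ℝ • v j))
    (hcross : ∀ m i, m ≠ i → |⟪vt m, vt i⟫_ℝ| ≤ a) (hnorm : ∀ i, |‖vt i‖ ^ 2 - 1| ≤ a)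
    (hpos : 0 < 1 - a - n * g ^ 2) (hcond : a + n * g ^ 2 ≤ g * √(1 - a - n * g ^ 2))
    (i : ι) : ∀ m, i < m → |⟪vt m, v i⟫_ℝ| ≤ g := by
  have hon := orthonormal_of_gramSchmidt_recursion hY hYne hv
  have hsqrt : 0 < √(1 - a - n * g ^ 2) := Real.sqrt_pos.mpr hpos
  induction i using WellFoundedLT.induction with
  | _ i ih =>
    intro m him
    have hlow : √(1 - a - n * g ^ 2) ≤ Y i := hY i ▸
      hon.sqrt_le_norm_sub_sum_inner_smul (hcard i) (hnorm i)
        fun j hj => ih j (mem_Iio.mp hj) i (mem_Iio.mp hj)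
    have hexpand : ⟪vt m, v i⟫_ℝ =
        (⟪vt m, vt i⟫_ℝ - ∑ j ∈ Iio i, ⟪vt i, v j⟫_ℝ * ⟪vt m, v j⟫_ℝ) / Y i := by
      rw [hv i, real_inner_smul_right, inner_sub_right, inner_sum, div_eq_inv_mul]
      simp only [real_inner_smul_right]
    have hsum : |∑ j ∈ Iio i, ⟪vt i, v j⟫_ℝ * ⟪vt m, v j⟫_ℝ| ≤ n * g ^ 2 :=
      (abs_sum_mul_le_card_mul_sq _ (fun j hj => ih j (mem_Iio.mp hj) i (mem_Iio.mp hj))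
        fun j hj => ih j (mem_Iio.mp hj) m ((mem_Iio.mp hj).trans him)).trans
        (mul_le_mul_of_nonneg_right (hcard i) (sq_nonneg g))
    have hnum : |⟪vt m, vt i⟫_ℝ - ∑ j ∈ Iio i, ⟪vt i, v j⟫_ℝ * ⟪vt m, v j⟫_ℝ| ≤ a + n * g ^ 2 :=
      (abs_sub _ _).trans (add_le_add (hcross m i him.ne') hsum)
    calc |⟪vt m, v i⟫_ℝ|
        = |⟪vt m, vt i⟫_ℝ - ∑ j ∈ Iio i, ⟪vt i, v j⟫_ℝ * ⟪vt m, v j⟫_ℝ| / Y i := by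
          rw [hexpand, abs_div, abs_of_pos (hsqrt.trans_le hlow)]
      _ ≤ (a + n * g ^ 2) / √(1 - a - n * g ^ 2) :=
          div_le_div₀ ((abs_nonneg _).trans hnum) hnum hsqrt hlow
      _ ≤ g := (div_le_iff₀ hsqrt).mpr hcond

end GramSchmidt

theorem gram_schmidt_normalization_factor_bound_general (N k : ℕ)
    (τ M G : ℝ)
    (hpos : 0 < 1 - M * τ ^ 2 - τ ^ 4 * ((k:ℝ) - 1) * G ^ 2)
    (hcond : (M + τ ^ 2 * ((k:ℝ) - 1) * G ^ 2) /
      Real.sqrt (1 - M * τ ^ 2 - τ ^ 4 * ((k:ℝ) - 1) * G ^ 2) ≤ G)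
    (vt v : Fin k → EuclideanSpace ℝ (Fin N))
    (hcross : ∀ m i : Fin k, m ≠ i → |⟪vt m, vt i⟫_ℝ| ≤ M * τ ^ 2)
    (hnorm : ∀ i : Fin k, |‖vt i‖ ^ 2 - 1| ≤ M * τ ^ 2)
    (Y : Fin k → ℝ)
    (hY : ∀ i : Fin k,
      Y i = ‖vt i - ∑ j ∈ Finset.Iio i, ⟪vt i, v j⟫_ℝ • v j‖)
    (hYne : ∀ i : Fin k, Y i ≠ 0)
    (hv : ∀ i : Fin k,
      v i = (Y i)⁻¹ • (vt i - ∑ j ∈ Finset.Iio i, ⟪vt i, v j⟫_ℝ • v j)) :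
    ∀ i : Fin k,
      Y i ^ 2 = ‖vt i‖ ^ 2 - ∑ j ∈ Finset.Iio i, ⟪vt i, v j⟫_ℝ ^ 2 ∧
      Real.sqrt (1 - M * τ ^ 2 - ((k:ℝ) - 1) * G ^ 2 * τ ^ 4) ≤ Y i ∧
      Y i ≤ Real.sqrt (1 + M * τ ^ 2 + ((k:ℝ) - 1) * G ^ 2 * τ ^ 4) := by
  have hcard : ∀ i : Fin k, (#(Iio i) : ℝ) ≤ k - 1 := fun i => by
    rw [Fin.card_Iio, le_sub_iff_add_le]
    exact_mod_cast i.isLt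
  have hA : 1 - M * τ ^ 2 - τ ^ 4 * ((k:ℝ) - 1) * G ^ 2 =
      1 - M * τ ^ 2 - ((k:ℝ) - 1) * (G * τ ^ 2) ^ 2 := by ring
  rw [hA] at hpos hcond
  have hcond' : M * τ ^ 2 + ((k:ℝ) - 1) * (G * τ ^ 2) ^ 2 ≤
      G * τ ^ 2 * √(1 - M * τ ^ 2 - ((k:ℝ) - 1) * (G * τ ^ 2) ^ 2) := by
    have h := mul_le_mul_of_nonneg_left ((div_le_iff₀ (Real.sqrt_pos.mpr hpos)).mp hcond)
      (sq_nonneg τ)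
    linear_combination h
  have hon := orthonormal_of_gramSchmidt_recursion hY hYne hv
  intro i
  have hsq : Y i ^ 2 = ‖vt i‖ ^ 2 - ∑ j ∈ Iio i, ⟪vt i, v j⟫_ℝ ^ 2 :=
    hY i ▸ hon.norm_sub_sum_inner_smul_sq _ _
  refine ⟨hsq, ?_, ?_⟩
  · convert hY i ▸ hon.sqrt_le_norm_sub_sum_inner_smul (hcard i) (hnorm i) fun j hj =>
      abs_inner_le_of_gramSchmidt_recursion hcard hY hYne hv hcross hnorm hpos hcond' j i
        (mem_Iio.mp hj) using 2
    ring
  · refine (le_abs_self _).trans (Real.abs_le_sqrt ?_)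
    have hk : (0 : ℝ) ≤ (k:ℝ) - 1 := (#(Iio i)).cast_nonneg.trans (hcard i)
    have hsum : 0 ≤ ∑ j ∈ Iio i, ⟪vt i, v j⟫_ℝ ^ 2 := sum_nonneg fun j _ => sq_nonneg _
    rw [hsq]
    linarith [(abs_le.mp (hnorm i)).2, mul_nonneg hk (sq_nonneg (G * τ ^ 2))]

/-- Estimate (4.13) of the paper: identity and two-sided bound for the Gram–Schmidt
normalization factors Y_i in the explicit Euler scheme for index-k saddle dynamics. -/
theorem gram_schmidt_normalization_factor_bound (N k : ℕ) (hN : 1 ≤ N) (hk : 1 ≤ k)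
    (τ M G : ℝ) (hτ : 0 < τ) (hM : 0 < M) (hMG : M < G)
    (hpos : 0 < 1 - M * τ ^ 2 - τ ^ 4 * ((k:ℝ) - 1) * G ^ 2)
    (hcond : (M + τ ^ 2 * ((k:ℝ) - 1) * G ^ 2) /
      Real.sqrt (1 - M * τ ^ 2 - τ ^ 4 * ((k:ℝ) - 1) * G ^ 2) ≤ G)
    (vt v : Fin k → EuclideanSpace ℝ (Fin N))
    (hcross : ∀ m i : Fin k, m ≠ i → |⟪vt m, vt i⟫_ℝ| ≤ M * τ ^ 2)
    (hnorm : ∀ i : Fin k, |‖vt i‖ ^ 2 - 1| ≤ M * τ ^ 2)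
    (Y : Fin k → ℝ)
    (hY : ∀ i : Fin k,
      Y i = ‖vt i - ∑ j ∈ Finset.Iio i, ⟪vt i, v j⟫_ℝ • v j‖)
    (hYne : ∀ i : Fin k, Y i ≠ 0)
    (hv : ∀ i : Fin k,
      v i = (Y i)⁻¹ • (vt i - ∑ j ∈ Finset.Iio i, ⟪vt i, v j⟫_ℝ • v j)) :
    ∀ i : Fin k,
      Y i ^ 2 = ‖vt i‖ ^ 2 - ∑ j ∈ Finset.Iio i, ⟪vt i, v j⟫_ℝ ^ 2 ∧
      Real.sqrt (1 - M * τ ^ 2 - ((k:ℝ) - 1) * G ^ 2 * τ ^ 4) ≤ Y i ∧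
      Y i ≤ Real.sqrt (1 + M * τ ^ 2 + ((k:ℝ) - 1) * G ^ 2 * τ ^ 4) :=
  gram_schmidt_normalization_factor_bound_general N k τ M G hpos hcond vt v hcross hnorm Y hY hYne
    hv
end

section
/- Let k ≥ 1, γ > 0 and Ĵ > 0. There exist τ₀ > 0 and Q > 0, depending only on k, γ and Ĵ, such that the following holds for every 0 < τ ≤ τ₀ and every N ≥ 1: if v_1, …, v_k ∈ ℝ^N are orthonormal, J is a self-adjoint (symmetric) linear map from ℝ^N to ℝ^N with operator norm ‖J‖ ≤ Ĵ, ṽ_i = v_i + τ γ (I - v_i v_iᵀ - 2 ∑_{j=1}^{i-1} v_j v_jᵀ) J v_i for 1 ≤ i ≤ k, and v_1⁺, …, v_k⁺ are obtained from ṽ_1, …, ṽ_k by the normalized Gram–Schmidt procedure v_i⁺ = (ṽ_i - ∑_{j=1}^{i-1} ⟪ṽ_i, v_j⁺⟫ v_j⁺)/‖ṽ_i - ∑_{j=1}^{i-1} ⟪ṽ_i, v_j⁺⟫ v_j⁺‖ (with nonzero denominators), then ‖v_i⁺ - ṽ_i‖ ≤ Q τ² for all 1 ≤ i ≤ k. 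-/
/-!
The Euler update `ṽᵢ = vᵢ + s aᵢ` (with `s = τγ`) is orthonormal up to `O(s²)`: `aᵢ ⟂ vᵢ` gives
`‖ṽᵢ‖² = 1 + s²‖aᵢ‖²`, and for `j < i` the first-order terms of `⟪ṽᵢ, ṽⱼ⟫` cancel because `J` is
symmetric and the factor `2` in front of `∑_{j<i} vⱼvⱼᵀ` makes them opposite; Bessel's inequality
gives `‖aᵢ‖ ≤ 4‖J‖`. Normalized
Gram–Schmidt moves an `ε`-almost orthonormal family by `O(ε)`, by induction over the steps: every
projection coefficient `⟪ṽᵢ, v⁺ⱼ⟫` is `O(ε)`, and so is the final normalization.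
-/

open scoped InnerProductSpace
open Finset

lemma abs_sub_one_le_abs_sq_sub_one {x : ℝ} (hx : 0 ≤ x) : |x - 1| ≤ |x ^ 2 - 1| := by
  rw [show x ^ 2 - 1 = (x - 1) * (x + 1) by ring, abs_mul]
  exact le_mul_of_one_le_right (abs_nonneg _) (by rw [abs_of_pos (by positivity)]; linarith)

section

variable {E : Type*} [NormedAddCommGroup E] [InnerProductSpace ℝ E]

def gramSchmidtResidual {ι : Type*} [Preorder ι] [LocallyFiniteOrderBot ι] (w p : ι → E)
    (i : ι) : E :=
  w i - ∑ j ∈ Iio i, ⟪w i, p j⟫_ℝ • p j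

lemma norm_inv_norm_smul_sub_self {u : E} (hu : u ≠ 0) : ‖‖u‖⁻¹ • u - u‖ = |1 - ‖u‖| := by
  have h : (‖u‖⁻¹ - 1) * ‖u‖ = 1 - ‖u‖ := by
    rw [sub_one_mul, inv_mul_cancel₀ (norm_ne_zero_iff.2 hu)]
  rw [show ‖u‖⁻¹ • u - u = (‖u‖⁻¹ - 1) • u by rw [sub_smul, one_smul], norm_smul,
    Real.norm_eq_abs, ← h, abs_mul, abs_norm]

lemma abs_inner_le_abs_inner_add_norm_mul_norm_sub (a b c : E) :
    |⟪a, c⟫_ℝ| ≤ |⟪a, b⟫_ℝ| + ‖a‖ * ‖c - b‖ := by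
  calc |⟪a, c⟫_ℝ| = |⟪a, b⟫_ℝ + ⟪a, c - b⟫_ℝ| := by rw [← inner_add_right, add_sub_cancel]
    _ ≤ |⟪a, b⟫_ℝ| + ‖a‖ * ‖c - b‖ :=
      (abs_add_le _ _).trans (add_le_add le_rfl (abs_real_inner_le_norm _ _))

lemma norm_normalize_gramSchmidtResidual_sub_le {ι : Type*} [Preorder ι]
    [LocallyFiniteOrderBot ι] {w p : ι → E} {i : ι} (hp : ∀ j < i, ‖p j‖ = 1)
    (hr : gramSchmidtResidual w p i ≠ 0) :
    ‖‖gramSchmidtResidual w p i‖⁻¹ • gramSchmidtResidual w p i - w i‖ ≤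
      |‖w i‖ - 1| + 2 * ∑ j ∈ Iio i, |⟪w i, p j⟫_ℝ| := by
  set r := gramSchmidtResidual w p i with hr_def
  have hres : ‖r - w i‖ ≤ ∑ j ∈ Iio i, |⟪w i, p j⟫_ℝ| := by
    rw [hr_def, gramSchmidtResidual, sub_sub_cancel_left, norm_neg]
    refine (norm_sum_le _ _).trans (sum_le_sum fun j hj => ?_)
    rw [norm_smul, hp j (mem_Iio.1 hj), mul_one, Real.norm_eq_abs]
  have hnorm : |1 - ‖r‖| ≤ |‖w i‖ - 1| + ‖r - w i‖ :=
    calc |1 - ‖r‖| ≤ |1 - ‖w i‖| + |‖w i‖ - ‖r‖| := abs_sub_le _ _ _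
      _ ≤ |‖w i‖ - 1| + ‖r - w i‖ := by
        rw [abs_sub_comm 1, norm_sub_rev r]; gcongr; exact abs_norm_sub_norm_le _ _
  calc ‖‖r‖⁻¹ • r - w i‖ ≤ ‖‖r‖⁻¹ • r - r‖ + ‖r - w i‖ := norm_sub_le_norm_sub_add_norm_sub _ _ _
    _ ≤ |‖w i‖ - 1| + 2 * ∑ j ∈ Iio i, |⟪w i, p j⟫_ℝ| := by
      rw [norm_inv_norm_smul_sub_self hr]; linarith

theorem norm_gramSchmidt_sub_le_of_almostOrthonormal {k : ℕ} {w p : Fin k → E} {ε : ℝ}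
    (hε : ε ≤ 1) (hw : ∀ i, |‖w i‖ ^ 2 - 1| ≤ ε) (hw' : ∀ i j, j < i → |⟪w i, w j⟫_ℝ| ≤ ε)
    (hne : ∀ i, gramSchmidtResidual w p i ≠ 0)
    (hp : ∀ i, p i = ‖gramSchmidtResidual w p i‖⁻¹ • gramSchmidtResidual w p i) (i : Fin k) :
    ‖p i - w i‖ ≤ (7 * k) ^ ((i : ℕ) + 1) * ε := by
  have hε0 : 0 ≤ ε := (abs_nonneg _).trans (hw i)
  have hk : (1 : ℝ) ≤ k := by exact_mod_cast i.pos
  have hR : (1 : ℝ) ≤ 7 * k := by linarith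
  have hp1 : ∀ j, ‖p j‖ = 1 := fun j => by
    rw [hp j, norm_smul, norm_inv, norm_norm, inv_mul_cancel₀ (norm_ne_zero_iff.2 (hne j))]
  have hw2 : ∀ j, ‖w j‖ ≤ 2 := fun j => by
    nlinarith [abs_le.1 (hw j), norm_nonneg (w j)]
  induction i using WellFoundedLT.induction with
  | ind i ih =>
  have hRi : (1 : ℝ) ≤ (7 * k) ^ (i : ℕ) := one_le_pow₀ hR
  have hcoef : ∀ j ∈ Iio i, |⟪w i, p j⟫_ℝ| ≤ 3 * (7 * k) ^ (i : ℕ) * ε := fun j hj => by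
    have hji := mem_Iio.1 hj
    have hej : ‖p j - w j‖ ≤ (7 * k) ^ (i : ℕ) * ε :=
      (ih j hji).trans (mul_le_mul_of_nonneg_right (pow_le_pow_right₀ hR hji) hε0)
    calc |⟪w i, p j⟫_ℝ| ≤ |⟪w i, w j⟫_ℝ| + ‖w i‖ * ‖p j - w j‖ :=
          abs_inner_le_abs_inner_add_norm_mul_norm_sub _ _ _
      _ ≤ ε + 2 * ((7 * k) ^ (i : ℕ) * ε) := by gcongr; exacts [hw' i j hji, hw2 i]
      _ ≤ 3 * (7 * k) ^ (i : ℕ) * ε := by nlinarith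
  have hi : ((i : ℕ) : ℝ) ≤ k := by exact_mod_cast i.isLt.le
  calc ‖p i - w i‖ ≤ |‖w i‖ - 1| + 2 * ∑ j ∈ Iio i, |⟪w i, p j⟫_ℝ| := by
        rw [hp i]; exact norm_normalize_gramSchmidtResidual_sub_le (fun j _ => hp1 j) (hne i)
    _ ≤ ε + 2 * ∑ j ∈ Iio i, 3 * (7 * k) ^ (i : ℕ) * ε := by
        gcongr with j hj
        exacts [(abs_sub_one_le_abs_sq_sub_one (norm_nonneg _)).trans (hw i), hcoef j hj]
    _ = ε + 6 * i * (7 * k) ^ (i : ℕ) * ε := by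
        rw [sum_const, Fin.card_Iio, nsmul_eq_mul]; ring
    _ ≤ (7 * k) ^ ((i : ℕ) + 1) * ε := by
        have hX : ε ≤ (7 * k) ^ (i : ℕ) * ε := le_mul_of_one_le_left hε0 hRi
        have hiX : (i : ℝ) * ((7 * k) ^ (i : ℕ) * ε) ≤ k * ((7 * k) ^ (i : ℕ) * ε) := by gcongr
        have hkX : (7 * k) ^ (i : ℕ) * ε ≤ k * ((7 * k) ^ (i : ℕ) * ε) :=
          le_mul_of_one_le_left (by positivity) hk
        rw [pow_succ]; linarith

lemma Orthonormal.norm_sum_inner_smul_le {ι : Type*} {v : ι → E} (hv : Orthonormal ℝ v)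
    (s : Finset ι) (x : E) : ‖∑ j ∈ s, ⟪v j, x⟫_ℝ • v j‖ ≤ ‖x‖ := by
  refine le_of_sq_le_sq ?_ (norm_nonneg x)
  rw [← real_inner_self_eq_norm_sq, hv.inner_sum]
  simpa [← sq] using hv.sum_inner_products_le (s := s) x

lemma Orthonormal.inner_right_sum_of_notMem {ι : Type*} {v : ι → E} (hv : Orthonormal ℝ v)
    (l : ι → ℝ) {s : Finset ι} {i : ι} (hi : i ∉ s) : ⟪v i, ∑ j ∈ s, l j • v j⟫_ℝ = 0 := by
  rw [inner_sum]
  exact sum_eq_zero fun j hj => by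
    rw [real_inner_smul_right, hv.inner_eq_zero (ne_of_mem_of_not_mem hj hi).symm, mul_zero]

section SaddleDynamics

variable {ι : Type*} [LinearOrder ι] [LocallyFiniteOrderBot ι] (J : E →L[ℝ] E) (v : ι → E)

/-- The velocity `(I - vᵢvᵢᵀ - 2∑_{j<i} vⱼvⱼᵀ) J vᵢ` of `vᵢ` in index-k saddle dynamics. -/
def saddleVelocity (i : ι) : E :=
  J (v i) - ⟪v i, J (v i)⟫_ℝ • v i - (2 : ℝ) • ∑ j ∈ Iio i, ⟪v j, J (v i)⟫_ℝ • v j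

variable {J v}

lemma inner_saddleVelocity_self (hv : Orthonormal ℝ v) (i : ι) :
    ⟪v i, saddleVelocity J v i⟫_ℝ = 0 := by
  rw [saddleVelocity, inner_sub_right, inner_sub_right, real_inner_smul_right,
    real_inner_smul_right, real_inner_self_eq_norm_sq, hv.1 i,
    hv.inner_right_sum_of_notMem _ (notMem_Iio_self)]
  ring

lemma inner_saddleVelocity_add_inner_saddleVelocity (hv : Orthonormal ℝ v)
    (hJ : (J : E →ₗ[ℝ] E).IsSymmetric) {i j : ι} (hji : j < i) :
    ⟪v i, saddleVelocity J v j⟫_ℝ + ⟪saddleVelocity J v i, v j⟫_ℝ = 0 := by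
  have hJij : ⟪J (v i), v j⟫_ℝ = ⟪v i, J (v j)⟫_ℝ := hJ (v i) (v j)
  have hJji : ⟪v j, J (v i)⟫_ℝ = ⟪v i, J (v j)⟫_ℝ := by rw [real_inner_comm, hJij]
  have hleft : ⟪∑ l ∈ Iio i, ⟪v l, J (v i)⟫_ℝ • v l, v j⟫_ℝ = ⟪v j, J (v i)⟫_ℝ := by
    simpa using hv.inner_left_sum (fun l => ⟪v l, J (v i)⟫_ℝ) (mem_Iio.2 hji)
  rw [saddleVelocity, saddleVelocity, inner_sub_right, inner_sub_right, inner_sub_left,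
    inner_sub_left, real_inner_smul_right, real_inner_smul_right, real_inner_smul_left,
    real_inner_smul_left, hv.inner_eq_zero hji.ne', hleft, hJij, hJji,
    hv.inner_right_sum_of_notMem _ fun h => lt_asymm hji (mem_Iio.1 h)]
  ring

lemma norm_saddleVelocity_le (hv : Orthonormal ℝ v) (i : ι) :
    ‖saddleVelocity J v i‖ ≤ 4 * ‖J‖ := by
  have hJv : ‖J (v i)‖ ≤ ‖J‖ := by simpa [hv.1 i] using J.le_opNorm (v i)
  have hproj : ‖⟪v i, J (v i)⟫_ℝ • v i‖ ≤ ‖J (v i)‖ := by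
    simpa using hv.norm_sum_inner_smul_le {i} (J (v i))
  calc ‖saddleVelocity J v i‖
      ≤ ‖J (v i)‖ + ‖⟪v i, J (v i)⟫_ℝ • v i‖ + 2 * ‖∑ j ∈ Iio i, ⟪v j, J (v i)⟫_ℝ • v j‖ := by
        refine (norm_sub_le _ _).trans (add_le_add (norm_sub_le _ _) ?_)
        rw [norm_smul, Real.norm_two]
    _ ≤ ‖J (v i)‖ + ‖J (v i)‖ + 2 * ‖J (v i)‖ := by
        gcongr; exact hv.norm_sum_inner_smul_le _ _
    _ ≤ 4 * ‖J‖ := by linarith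

lemma norm_add_smul_saddleVelocity_sq (hv : Orthonormal ℝ v) (s : ℝ) (i : ι) :
    ‖v i + s • saddleVelocity J v i‖ ^ 2 = 1 + s ^ 2 * ‖saddleVelocity J v i‖ ^ 2 := by
  rw [norm_add_sq_real, real_inner_smul_right, inner_saddleVelocity_self hv, norm_smul,
    Real.norm_eq_abs, mul_pow, sq_abs, hv.1 i]
  ring

lemma inner_add_smul_saddleVelocity (hv : Orthonormal ℝ v) (hJ : (J : E →ₗ[ℝ] E).IsSymmetric)
    (s : ℝ) {i j : ι} (hji : j < i) :
    ⟪v i + s • saddleVelocity J v i, v j + s • saddleVelocity J v j⟫_ℝ =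
      s ^ 2 * ⟪saddleVelocity J v i, saddleVelocity J v j⟫_ℝ := by
  have h := inner_saddleVelocity_add_inner_saddleVelocity hv hJ hji
  simp only [inner_add_left, inner_add_right, real_inner_smul_left, real_inner_smul_right,
    hv.2 hji.ne']
  linear_combination s * h

lemma abs_norm_add_smul_saddleVelocity_sq_sub_one_le (hv : Orthonormal ℝ v) (s : ℝ) (i : ι) :
    |‖v i + s • saddleVelocity J v i‖ ^ 2 - 1| ≤ s ^ 2 * (4 * ‖J‖) ^ 2 := by
  rw [norm_add_smul_saddleVelocity_sq hv, add_sub_cancel_left, abs_of_nonneg (by positivity)]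
  gcongr
  exact norm_saddleVelocity_le hv i

lemma abs_inner_add_smul_saddleVelocity_le (hv : Orthonormal ℝ v)
    (hJ : (J : E →ₗ[ℝ] E).IsSymmetric) (s : ℝ) {i j : ι} (hji : j < i) :
    |⟪v i + s • saddleVelocity J v i, v j + s • saddleVelocity J v j⟫_ℝ| ≤
      s ^ 2 * (4 * ‖J‖) ^ 2 := by
  rw [inner_add_smul_saddleVelocity hv hJ s hji, abs_mul, abs_sq, sq (4 * ‖J‖)]
  gcongr
  exact (abs_real_inner_le_norm _ _).trans
    (mul_le_mul (norm_saddleVelocity_le hv i) (norm_saddleVelocity_le hv j) (norm_nonneg _)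
      (by positivity))

end SaddleDynamics

end

/-- Lemma 4.2 of the paper: the normalized Gram–Schmidt orthonormalization step of
the explicit Euler scheme for index-k saddle dynamics changes each un-normalized
direction update by at most Qτ², for τ sufficiently small. -/
theorem gram_schmidt_error_euler_kSD (k : ℕ) (hk : 1 ≤ k)
    (γ Jhat : ℝ) (hγ : 0 < γ) (hJhat : 0 < Jhat) :
    ∃ τ₀ : ℝ, 0 < τ₀ ∧ ∃ Q : ℝ, 0 < Q ∧
      ∀ τ : ℝ, 0 < τ → τ ≤ τ₀ →
        ∀ N : ℕ, 1 ≤ N →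
          ∀ (v : Fin k → EuclideanSpace ℝ (Fin N)), Orthonormal ℝ v →
            ∀ (J : EuclideanSpace ℝ (Fin N) →L[ℝ] EuclideanSpace ℝ (Fin N)),
              (∀ a b, ⟪J a, b⟫_ℝ = ⟪a, J b⟫_ℝ) → ‖J‖ ≤ Jhat →
              ∀ (vt vp : Fin k → EuclideanSpace ℝ (Fin N)),
                (∀ i, vt i = v i + (τ * γ) •
                  (J (v i) - ⟪v i, J (v i)⟫_ℝ • v i -
                    (2:ℝ) • ∑ j ∈ Finset.Iio i, ⟪v j, J (v i)⟫_ℝ • v j)) →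
                (∀ i : Fin k,
                  vt i - ∑ j ∈ Finset.Iio i, ⟪vt i, vp j⟫_ℝ • vp j ≠ 0) →
                (∀ i : Fin k,
                  vp i = ‖vt i - ∑ j ∈ Finset.Iio i, ⟪vt i, vp j⟫_ℝ • vp j‖⁻¹ •
                    (vt i - ∑ j ∈ Finset.Iio i, ⟪vt i, vp j⟫_ℝ • vp j)) →
                ∀ i : Fin k, ‖vp i - vt i‖ ≤ Q * τ ^ 2 := by
  have hk' : (1 : ℝ) ≤ 7 * k := by
    have : (1 : ℝ) ≤ k := by exact_mod_cast hk
    linarith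
  refine ⟨(4 * γ * Jhat)⁻¹, by positivity, (4 * γ * Jhat) ^ 2 * (7 * k) ^ k,
    mul_pos (by positivity) (pow_pos (by linarith) k), ?_⟩
  intro τ hτ hττ₀ N _ v hv J hJ hJhat vt vp hvt hne hvp i
  obtain rfl : vt = fun i => v i + (τ * γ) • saddleVelocity J v i := funext hvt
  have hstep : (τ * γ) ^ 2 * (4 * ‖J‖) ^ 2 ≤ (τ * γ) ^ 2 * (4 * Jhat) ^ 2 := by gcongr
  have hε : (τ * γ) ^ 2 * (4 * Jhat) ^ 2 ≤ 1 := by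
    rw [← mul_pow, show τ * γ * (4 * Jhat) = τ * (4 * γ * Jhat) by ring]
    exact pow_le_one₀ (by positivity) ((le_inv_mul_iff₀' (by positivity)).1 (by rwa [mul_one]))
  calc ‖vp i - (v i + (τ * γ) • saddleVelocity J v i)‖
      ≤ (7 * k) ^ ((i : ℕ) + 1) * ((τ * γ) ^ 2 * (4 * Jhat) ^ 2) :=
        norm_gramSchmidt_sub_le_of_almostOrthonormal hε
          (fun i => (abs_norm_add_smul_saddleVelocity_sq_sub_one_le hv _ i).trans hstep)
          (fun i j hji => (abs_inner_add_smul_saddleVelocity_le hv hJ _ hji).trans hstep)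
          hne hvp i
    _ ≤ (7 * k) ^ k * ((τ * γ) ^ 2 * (4 * Jhat) ^ 2) := by
        gcongr
        exact i.isLt
    _ = (4 * γ * Jhat) ^ 2 * (7 * k) ^ k * τ ^ 2 := by ring
end

section
/- Let N ≥ 1, k ≥ 1, T > 0, β > 0, L > 0, and let F : ℝ^N → ℝ^N satisfy ‖F(y)‖ ≤ L(1 + ‖y‖) for all y. Fix x_0 ∈ ℝ^N. Then there exists a constant C > 0, depending only on ‖x_0‖, k, β, L and T, such that for every positive integer N_T, setting τ = T/N_T, and for all sequences (x_n)_{n=0}^{N_T} and (v_{j,n})_{n=0}^{N_T} (1 ≤ j ≤ k) in ℝ^N with ‖v_{j,n}‖ = 1 for all j, n and x_n = x_{n-1} + τ β (I - 2 ∑_{j=1}^k v_{j,n-1} v_{j,n-1}ᵀ) F(x_{n-1}) for 1 ≤ n ≤ N_T, one has ‖x_n‖ ≤ C for all 0 ≤ n ≤ N_T. -/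
/-!
Since every `vⱼ` is a unit vector, the update direction `F y - 2 ∑ⱼ ⟪vⱼ, F y⟫ vⱼ` has norm at
most `(1 + 2k) ‖F y‖ ≤ (1 + 2k) L (1 + ‖y‖)`. Hence `1 + ‖xₙ‖` grows by a factor at most
`1 + τ |β| (1 + 2k) L` per step, and after at most `N_T = T / τ` steps by at most
`exp (|T β| (1 + 2k) L)`.
-/

open scoped InnerProductSpace
open Real

theorem le_exp_mul_of_le_one_add_mul {u : ℕ → ℝ} {a : ℝ} (ha : 0 ≤ a) (h₀ : 0 ≤ u 0) {n : ℕ}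
    (h : ∀ m < n, u (m + 1) ≤ (1 + a) * u m) : u n ≤ exp (a * n) * u 0 :=
  calc u n ≤ (1 + a) ^ n * u 0 := le_geom (by positivity) n h
    _ ≤ exp a ^ n * u 0 := by gcongr; linarith [add_one_le_exp a]
    _ = exp (a * n) * u 0 := by rw [← exp_nat_mul, mul_comm (n : ℝ)]

section ReflectionStep

variable {ι E : Type*} [Fintype ι] [NormedAddCommGroup E] [InnerProductSpace ℝ E]
  {v : ι → E}

theorem norm_sum_inner_smul_le (hv : ∀ j, ‖v j‖ ≤ 1) (y : E) :
    ‖∑ j, ⟪v j, y⟫_ℝ • v j‖ ≤ Fintype.card ι * ‖y‖ :=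
  calc ‖∑ j, ⟪v j, y⟫_ℝ • v j‖ ≤ ∑ j, ‖⟪v j, y⟫_ℝ • v j‖ := norm_sum_le _ _
    _ ≤ ∑ _j : ι, ‖y‖ := Finset.sum_le_sum fun j _ => by
        rw [norm_smul, Real.norm_eq_abs]
        calc |⟪v j, y⟫_ℝ| * ‖v j‖ ≤ (‖v j‖ * ‖y‖) * ‖v j‖ := by
              gcongr; exact abs_real_inner_le_norm _ _
          _ ≤ (1 * ‖y‖) * 1 := by gcongr <;> exact hv j
          _ = ‖y‖ := by ring
    _ = Fintype.card ι * ‖y‖ := by simp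

theorem norm_sub_two_smul_sum_inner_smul_le (hv : ∀ j, ‖v j‖ ≤ 1) (y : E) :
    ‖y - (2 : ℝ) • ∑ j, ⟪v j, y⟫_ℝ • v j‖ ≤ (1 + 2 * Fintype.card ι) * ‖y‖ :=
  calc ‖y - (2 : ℝ) • ∑ j, ⟪v j, y⟫_ℝ • v j‖
      ≤ ‖y‖ + 2 * ‖∑ j, ⟪v j, y⟫_ℝ • v j‖ := by
        simpa [norm_smul] using norm_sub_le y ((2 : ℝ) • ∑ j, ⟪v j, y⟫_ℝ • v j)
    _ ≤ ‖y‖ + 2 * (Fintype.card ι * ‖y‖) := by gcongr; exact norm_sum_inner_smul_le hv y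
    _ = (1 + 2 * Fintype.card ι) * ‖y‖ := by ring

theorem one_add_norm_add_smul_reflection_le {F : E → E} {L : ℝ}
    (hF : ∀ y, ‖F y‖ ≤ L * (1 + ‖y‖)) (hv : ∀ j, ‖v j‖ ≤ 1) (s : ℝ) (y : E) :
    1 + ‖y + s • (F y - (2 : ℝ) • ∑ j, ⟪v j, F y⟫_ℝ • v j)‖ ≤
      (1 + |s| * (1 + 2 * Fintype.card ι) * L) * (1 + ‖y‖) :=
  calc 1 + ‖y + s • (F y - (2 : ℝ) • ∑ j, ⟪v j, F y⟫_ℝ • v j)‖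
      ≤ 1 + ‖y‖ + |s| * ‖F y - (2 : ℝ) • ∑ j, ⟪v j, F y⟫_ℝ • v j‖ := by
        grw [norm_add_le, norm_smul, Real.norm_eq_abs, add_assoc]
    _ ≤ 1 + ‖y‖ + |s| * ((1 + 2 * Fintype.card ι) * (L * (1 + ‖y‖))) := by
        grw [norm_sub_two_smul_sum_inner_smul_le hv, hF]
    _ = (1 + |s| * (1 + 2 * Fintype.card ι) * L) * (1 + ‖y‖) := by ring

end ReflectionStep

theorem boundedness_euler_kSD_general (N k : ℕ)
    (T β L : ℝ)
    (F : EuclideanSpace ℝ (Fin N) → EuclideanSpace ℝ (Fin N))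
    (hF : ∀ y, ‖F y‖ ≤ L * (1 + ‖y‖))
    (x₀ : EuclideanSpace ℝ (Fin N)) :
    ∃ C : ℝ, 0 < C ∧
      ∀ (NT : ℕ), 0 < NT →
        ∀ (x : ℕ → EuclideanSpace ℝ (Fin N))
          (v : Fin k → ℕ → EuclideanSpace ℝ (Fin N)),
          x 0 = x₀ →
          (∀ j : Fin k, ∀ n ≤ NT, ‖v j n‖ = 1) →
          (∀ n, 1 ≤ n → n ≤ NT →
            x n = x (n - 1) + ((T / NT) * β) •
              (F (x (n - 1)) -
                (2:ℝ) • ∑ j, ⟪v j (n - 1), F (x (n - 1))⟫_ℝ • v j (n - 1))) →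
          ∀ n ≤ NT, ‖x n‖ ≤ C := by
  refine ⟨exp (|T * β| * (1 + 2 * k) * L) * (1 + ‖x₀‖), by positivity, ?_⟩
  intro NT hNT x v hx₀ hv hx n hn
  have hL : 0 ≤ L := by simpa using (norm_nonneg _).trans (hF 0)
  set a := |T / NT * β| * (1 + 2 * k) * L
  have ha : 0 ≤ a := mul_nonneg (by positivity) hL
  have hstep : ∀ m < n, 1 + ‖x (m + 1)‖ ≤ (1 + a) * (1 + ‖x m‖) := fun m hm => by
    rw [hx (m + 1) (by omega) (by omega), Nat.add_sub_cancel]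
    simpa using one_add_norm_add_smul_reflection_le hF (fun j => (hv j m (by omega)).le) _ _
  have haNT : a * NT = |T * β| * (1 + 2 * k) * L := by
    have : (NT : ℝ) ≠ 0 := by positivity
    simp only [a, abs_mul, abs_div, Nat.abs_cast]
    field_simp
  calc ‖x n‖ ≤ 1 + ‖x n‖ := by linarith
    _ ≤ exp (a * n) * (1 + ‖x 0‖) :=
        le_exp_mul_of_le_one_add_mul (u := fun m => 1 + ‖x m‖) ha (by positivity) hstep
    _ ≤ exp (|T * β| * (1 + 2 * k) * L) * (1 + ‖x₀‖) := by
        rw [hx₀, ← haNT]; gcongr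

/-- Uniform boundedness of the numerical position of the explicit Euler scheme
for index-k saddle dynamics (the bound \hat J_T of Section 4.1 of the paper). -/
theorem boundedness_euler_kSD (N k : ℕ) (hN : 1 ≤ N) (hk : 1 ≤ k)
    (T β L : ℝ) (hT : 0 < T) (hβ : 0 < β) (hL : 0 < L)
    (F : EuclideanSpace ℝ (Fin N) → EuclideanSpace ℝ (Fin N))
    (hF : ∀ y, ‖F y‖ ≤ L * (1 + ‖y‖))
    (x₀ : EuclideanSpace ℝ (Fin N)) :
    ∃ C : ℝ, 0 < C ∧
      ∀ (NT : ℕ), 0 < NT →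
        ∀ (x : ℕ → EuclideanSpace ℝ (Fin N))
          (v : Fin k → ℕ → EuclideanSpace ℝ (Fin N)),
          x 0 = x₀ →
          (∀ j : Fin k, ∀ n ≤ NT, ‖v j n‖ = 1) →
          (∀ n, 1 ≤ n → n ≤ NT →
            x n = x (n - 1) + ((T / NT) * β) •
              (F (x (n - 1)) -
                (2:ℝ) • ∑ j, ⟪v j (n - 1), F (x (n - 1))⟫_ℝ • v j (n - 1))) →
          ∀ n ≤ NT, ‖x n‖ ≤ C :=
  boundedness_euler_kSD_general N k T β L F hF x₀
end
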